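/- Let J be a plane graph with vertex set partitioned into three independent sets J1, J2, J3. If I ⊆ J1 ∪ J2 is an independent set in J, then the partition {(J1 ∪ J2) \ I, J3 ∪ I} of V(J) is compatible with {J1, J2, J3}, i.e., every facial 4-cycle of J has two non-consecutive vertices which belong either to the same part of both partitions or to distinct parts of both partitions. -/
import Mathlib

private def bimp (x y : Bool) : Bool := !x || y

private lemma key4 : ∀ (pa pb pc pd : Fin 3) (aI bI cI dI : Bool),
    (bimp (bimp aI (pa != 2) && bimp bI (pb != 2) && bimp cI (pc != 2) && bimp dI (pd != 2) &&
      (pa != pb) && (pb != pc) && (pc != pd) && (pd != pa) &&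
      !(aI && bI) && !(bI && cI) && !(cI && dI) && !(dI && aI))
     (((((pa != 2) && !aI) && ((pc != 2) && !cI) || !((pa != 2) && !aI) && !((pc != 2) && !cI)) && (pa == pc)) ||
      ((((pa != 2) && !aI) && !((pc != 2) && !cI) || !((pa != 2) && !aI) && ((pc != 2) && !cI)) && (pa != pc)) ||
      ((((pb != 2) && !bI) && ((pd != 2) && !dI) || !((pb != 2) && !bI) && !((pd != 2) && !dI)) && (pb == pd)) ||
      ((((pb != 2) && !bI) && !((pd != 2) && !dI) || !((pb != 2) && !bI) && ((pd != 2) && !dI)) && (pb != pd)))) = true := by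
  decide

private lemma mk_iff {P Q R S : Prop} (h : (¬P ∧ ¬Q) ∧ (¬R ∧ ¬S) ∨ (P ∨ Q) ∧ (R ∨ S)) :
    (¬P ∧ ¬Q ↔ ¬R ∧ ¬S) := by tauto

private lemma mk_not_iff {P Q R S : Prop} (h : (¬P ∧ ¬Q) ∧ (R ∨ S) ∨ (P ∨ Q) ∧ (¬R ∧ ¬S)) :
    ¬(¬P ∧ ¬Q ↔ ¬R ∧ ¬S) := by tauto

private lemma key4' (pa pb pc pd : Fin 3) (aI bI cI dI : Bool)
    (ha : aI = true → pa ≠ 2) (hb : bI = true → pb ≠ 2)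
    (hc : cI = true → pc ≠ 2) (hd : dI = true → pd ≠ 2)
    (hab : pa ≠ pb) (hbc : pb ≠ pc) (hcd : pc ≠ pd) (hda : pd ≠ pa)
    (iab : ¬(aI = true ∧ bI = true)) (ibc : ¬(bI = true ∧ cI = true))
    (icd : ¬(cI = true ∧ dI = true)) (ida : ¬(dI = true ∧ aI = true)) :
    (((pa ≠ 2 ∧ ¬aI = true) ↔ (pc ≠ 2 ∧ ¬cI = true)) ∧ pa = pc) ∨
    (¬((pa ≠ 2 ∧ ¬aI = true) ↔ (pc ≠ 2 ∧ ¬cI = true)) ∧ ¬pa = pc) ∨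
    (((pb ≠ 2 ∧ ¬bI = true) ↔ (pd ≠ 2 ∧ ¬dI = true)) ∧ pb = pd) ∨
    (¬((pb ≠ 2 ∧ ¬bI = true) ↔ (pd ≠ 2 ∧ ¬dI = true)) ∧ ¬pb = pd) := by
  have H := key4 pa pb pc pd aI bI cI dI
  simp only [bimp] at H
  simp at H
  simp only [Bool.eq_false_iff, Ne] at H
  rcases H with (((((((((((h|h)|h)|h)|h)|h)|h)|h)|h)|h)|h)|h) | (((⟨hk,he⟩|⟨hk,he⟩)|⟨hk,he⟩)|⟨hk,he⟩)
  · exact (ha h.1 h.2).elim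
  · exact (hb h.1 h.2).elim
  · exact (hc h.1 h.2).elim
  · exact (hd h.1 h.2).elim
  · exact (hab h).elim
  · exact (hbc h).elim
  · exact (hcd h).elim
  · exact (hda h).elim
  · exact (iab h).elim
  · exact (ibc h).elim
  · exact (icd h).elim
  · exact (ida h).elim
  · exact Or.inl ⟨mk_iff hk, he⟩
  · exact Or.inr (Or.inl ⟨mk_not_iff hk, he⟩)
  · exact Or.inr (Or.inr (Or.inl ⟨mk_iff hk, he⟩))
  · exact Or.inr (Or.inr (Or.inr ⟨mk_not_iff hk, he⟩))



/-- Lemma 1.1: if `I ⊆ J1 ∪ J2` is independent, the partition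
`{(J1 ∪ J2) \ I, J3 ∪ I}` is compatible with `{J1, J2, J3}`. -/
theorem stmt_0 {V : Type*} (J : SimpleGraph V)
    (J1 J2 J3 : Set V)
    (hcover : J1 ∪ J2 ∪ J3 = Set.univ)
    (h12 : Disjoint J1 J2) (h13 : Disjoint J1 J3) (h23 : Disjoint J2 J3)
    (hJ1 : ∀ ⦃x y⦄, x ∈ J1 → y ∈ J1 → ¬J.Adj x y)
    (hJ2 : ∀ ⦃x y⦄, x ∈ J2 → y ∈ J2 → ¬J.Adj x y)
    (hJ3 : ∀ ⦃x y⦄, x ∈ J3 → y ∈ J3 → ¬J.Adj x y)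
    -- `F4 a b c d` means `a b c d a` is a facial 4-cycle of the plane graph `J`
    (F4 : V → V → V → V → Prop)
    (hF4cyc : ∀ a b c d, F4 a b c d → [a, b, c, d].Nodup ∧
      J.Adj a b ∧ J.Adj b c ∧ J.Adj c d ∧ J.Adj d a)
    (I : Set V) (hI : I ⊆ J1 ∪ J2)
    (hIind : ∀ ⦃x y⦄, x ∈ I → y ∈ I → ¬J.Adj x y) :
    -- the partition {K1, K2} = {(J1 ∪ J2) \ I, J3 ∪ I} is compatible with {J1, J2, J3}:
    ∀ a b c d, F4 a b c d →
      (let K1 : Set V := (J1 ∪ J2) \ I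
       let sameJ : V → V → Prop := fun x y =>
         (x ∈ J1 ∧ y ∈ J1) ∨ (x ∈ J2 ∧ y ∈ J2) ∨ (x ∈ J3 ∧ y ∈ J3)
       (((a ∈ K1 ↔ c ∈ K1) ∧ sameJ a c) ∨ (¬(a ∈ K1 ↔ c ∈ K1) ∧ ¬sameJ a c)) ∨
       (((b ∈ K1 ↔ d ∈ K1) ∧ sameJ b d) ∨ (¬(b ∈ K1 ↔ d ∈ K1) ∧ ¬sameJ b d))) := by
  classical
  intro a b c d hf
  obtain ⟨-, Jab, Jbc, Jcd, Jda⟩ := hF4cyc a b c d hf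
  have mem3 : ∀ v : V, v ∈ J1 ∨ v ∈ J2 ∨ v ∈ J3 := by
    intro v
    have hv : v ∈ J1 ∪ J2 ∪ J3 := hcover ▸ Set.mem_univ v
    simpa [Set.mem_union, or_assoc] using hv
  set p : V → Fin 3 := fun v => if v ∈ J1 then 0 else if v ∈ J2 then 1 else 2 with hp
  have hpv : ∀ v, (v ∈ J1 ∧ p v = 0) ∨ (v ∈ J2 ∧ p v = 1) ∨ (v ∈ J3 ∧ p v = 2) := by
    intro v
    by_cases h1 : v ∈ J1
    · exact Or.inl ⟨h1, by simp [hp, h1]⟩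
    by_cases h2 : v ∈ J2
    · exact Or.inr (Or.inl ⟨h2, by simp [hp, h1, h2]⟩)
    · exact Or.inr (Or.inr ⟨((mem3 v).resolve_left h1).resolve_left h2, by simp [hp, h1, h2]⟩)
  have hne : ∀ x y, J.Adj x y → p x ≠ p y := by
    intro x y hxy heq
    rcases hpv x with ⟨hx, ex⟩ | ⟨hx, ex⟩ | ⟨hx, ex⟩ <;>
      rcases hpv y with ⟨hy, ey⟩ | ⟨hy, ey⟩ | ⟨hy, ey⟩ <;>
      rw [ex, ey] at heq <;>
      first
        | exact hJ1 hx hy hxy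
        | exact hJ2 hx hy hxy
        | exact hJ3 hx hy hxy
        | simp at heq
  have d12 : ∀ v, v ∈ J1 → v ∉ J2 := fun v h => Set.disjoint_left.mp h12 h
  have d21 : ∀ v, v ∈ J2 → v ∉ J1 := fun v h => Set.disjoint_right.mp h12 h
  have d13 : ∀ v, v ∈ J1 → v ∉ J3 := fun v h => Set.disjoint_left.mp h13 h
  have d31 : ∀ v, v ∈ J3 → v ∉ J1 := fun v h => Set.disjoint_right.mp h13 h
  have d23 : ∀ v, v ∈ J2 → v ∉ J3 := fun v h => Set.disjoint_left.mp h23 h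
  have d32 : ∀ v, v ∈ J3 → v ∉ J2 := fun v h => Set.disjoint_right.mp h23 h
  have hsame : ∀ x y, p x = p y ↔
      ((x ∈ J1 ∧ y ∈ J1) ∨ (x ∈ J2 ∧ y ∈ J2) ∨ (x ∈ J3 ∧ y ∈ J3)) := by
    intro x y
    rcases hpv x with ⟨hx, ex⟩ | ⟨hx, ex⟩ | ⟨hx, ex⟩ <;>
      rcases hpv y with ⟨hy, ey⟩ | ⟨hy, ey⟩ | ⟨hy, ey⟩ <;> rw [ex, ey]
    · simp [hx, hy]
    · simp [d12 x hx, d21 y hy, d13 x hx]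
    · simp [d31 y hy, d12 x hx, d13 x hx]
    · simp [d21 x hx, d12 y hy, d23 x hx]
    · simp [hx, hy]
    · simp [d21 x hx, d32 y hy, d23 x hx]
    · simp [d31 x hx, d32 x hx, d13 y hy]
    · simp [d31 x hx, d32 x hx, d23 y hy]
    · simp [hx, hy]
  have hne2 : ∀ v, (p v ≠ 2) ↔ (v ∈ J1 ∨ v ∈ J2) := by
    intro v
    rcases hpv v with ⟨hv, ev⟩ | ⟨hv, ev⟩ | ⟨hv, ev⟩ <;> rw [ev]
    · simp [hv]
    · simp [hv]
    · simp only [ne_eq, not_true_eq_false, false_iff]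
      rintro (h | h)
      · exact Set.disjoint_left.mp h13 h hv
      · exact Set.disjoint_left.mp h23 h hv
  have K := key4' (p a) (p b) (p c) (p d)
    (decide (a ∈ I)) (decide (b ∈ I)) (decide (c ∈ I)) (decide (d ∈ I))
    (fun h => (hne2 a).mpr (hI (of_decide_eq_true h)))
    (fun h => (hne2 b).mpr (hI (of_decide_eq_true h)))
    (fun h => (hne2 c).mpr (hI (of_decide_eq_true h)))
    (fun h => (hne2 d).mpr (hI (of_decide_eq_true h)))
    (hne a b Jab) (hne b c Jbc) (hne c d Jcd) (hne d a Jda)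
    (fun ⟨x, y⟩ => hIind (of_decide_eq_true x) (of_decide_eq_true y) Jab)
    (fun ⟨x, y⟩ => hIind (of_decide_eq_true x) (of_decide_eq_true y) Jbc)
    (fun ⟨x, y⟩ => hIind (of_decide_eq_true x) (of_decide_eq_true y) Jcd)
    (fun ⟨x, y⟩ => hIind (of_decide_eq_true x) (of_decide_eq_true y) Jda)
  simp only [decide_eq_true_eq, hne2, hsame] at K
  simp only [Set.mem_diff, Set.mem_union]
  rcases K with h | h | h | h
  · exact Or.inl (Or.inl h)
  · exact Or.inl (Or.inr h)
  · exact Or.inr (Or.inl h)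
  · exact Or.inr (Or.inr h)
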